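/- arXiv:1907.09104 — 3 statements merged into one kernel-verified Lean document; each statement's English description precedes it below -/
import Mathlib

section
/- Let ((Ω, Σ, μ), (P_i, t_i)_{i∈I}) be a regular interactive epistemic model for a nonempty countable set I of agents, and suppose C(E) and C^1(E) are measurable for every measurable E. Then the common qualitative belief operator C and the common 1-belief operator C^1 satisfy Truth Axiom μ-almost surely: for every measurable E, μ(C(E) ∖ E) = 0 and μ(C^1(E) ∖ E) = 0. Moreover, t_i(ω, C(E) ∖ E) = 0 and t_i(ω, C^1(E) ∖ E) = 0 for every i ∈ I, every ω ∈ Ω, and every measurable E. -/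
open MeasureTheory

/-- An epistemic model over a measurable space `Ω` with prior `μ`. -/
structure EpiModel (Ω : Type) [MeasurableSpace Ω] (μ : Measure Ω) where
  P : Ω → Set Ω
  t : Ω → Set Ω → ℝ
  prob : IsProbabilityMeasure μ
  P_meas : ∀ ω, MeasurableSet (P ω)
  K_meas : ∀ E : Set Ω, MeasurableSet E → MeasurableSet {ω | P ω ⊆ E}
  t_nonneg : ∀ ω E, 0 ≤ t ω E
  t_le_one : ∀ ω E, t ω E ≤ 1
  t_meas : ∀ E : Set Ω, MeasurableSet E → Measurable fun ω => t ω E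
  P_pos : ∀ ω, 0 < μ (P ω)

namespace EpiModel

variable {Ω : Type} [MeasurableSpace Ω] {μ : Measure Ω}

/-- The `p`-belief operator `B^p`. -/
def B (M : EpiModel Ω μ) (p : ℝ) (E : Set Ω) : Set Ω := {ω | p ≤ M.t ω E}

/-- The qualitative belief operator `K`. -/
def K (M : EpiModel Ω μ) (A : Set Ω) : Set Ω := {ω | M.P ω ⊆ A}

/-- `(↑t(ω))`. -/
def up (M : EpiModel Ω μ) (ω : Ω) : Set Ω :=
  {ω' | ∀ E : Set Ω, MeasurableSet E → M.t ω E ≤ M.t ω' E}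

/-- `(↓t(ω))`. -/
def down (M : EpiModel Ω μ) (ω : Ω) : Set Ω :=
  {ω' | ∀ E : Set Ω, MeasurableSet E → M.t ω' E ≤ M.t ω E}

/-- `[t(ω)] = (↑t(ω)) ∩ (↓t(ω))`. -/
def cl (M : EpiModel Ω μ) (ω : Ω) : Set Ω := M.up ω ∩ M.down ω

/-- Invariance: the prior is the expectation of the posteriors. -/
def Invariance (M : EpiModel Ω μ) : Prop :=
  ∀ E : Set Ω, MeasurableSet E → (μ E).toReal = ∫ ω, M.t ω E ∂μ

/-- Entailment: `t(ω, P(ω)) = 1`. -/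
def Entailment (M : EpiModel Ω μ) : Prop := ∀ ω, M.t ω (M.P ω) = 1

/-- Self-Evidence of Beliefs: `P(ω) ⊆ (↑t(ω))`. -/
def SelfEvidence (M : EpiModel Ω μ) : Prop := ∀ ω, M.P ω ⊆ M.up ω

/-- Each `t(ω,·)` is the restriction of a countably additive probability measure. -/
def AdditiveTypes (M : EpiModel Ω μ) : Prop :=
  ∀ ω, ∃ ν : Measure Ω, IsProbabilityMeasure ν ∧
    ∀ E : Set Ω, MeasurableSet E → M.t ω E = (ν E).toReal

/-- A regular model. -/
def Regular (M : EpiModel Ω μ) : Prop :=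
  M.AdditiveTypes ∧ M.Invariance ∧ M.Entailment ∧ M.SelfEvidence

/-- Each type is the Bayes conditional probability given the information set. -/
def Bayes (M : EpiModel Ω μ) : Prop :=
  ∀ (ω : Ω) (E : Set Ω), MeasurableSet E →
    M.t ω E = (μ (E ∩ M.P ω)).toReal / (μ (M.P ω)).toReal

/-- A discrete environment: countable states, powerset σ-algebra, full-support prior. -/
def Discrete (Ω : Type) [MeasurableSpace Ω] (μ : Measure Ω) : Prop :=
  Countable Ω ∧ (∀ A : Set Ω, MeasurableSet A) ∧ ∀ ω : Ω, 0 < μ {ω}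

/-- `{P(ω)}` forms a partition. -/
def Partitional (M : EpiModel Ω μ) : Prop :=
  (∀ ω, ω ∈ M.P ω) ∧ ∀ ω ω', ω' ∈ M.P ω → M.P ω' = M.P ω

end EpiModel

section Interactive

variable {Ω : Type} [MeasurableSpace Ω] {μ : MeasureTheory.Measure Ω} {I : Type}

/-- Mutual `p`-belief operator `F^p`. -/
def Finter (M : I → EpiModel Ω μ) (p : ℝ) (E : Set Ω) : Set Ω := ⋂ i, (M i).B p E

/-- (Iterative) common `p`-belief operator `C^p`. -/
def Cp (M : I → EpiModel Ω μ) (p : ℝ) (E : Set Ω) : Set Ω :=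
  ⋂ n : ℕ, (Finter M p)^[n + 1] E

/-- Mutual qualitative belief operator `G`. -/
def G (M : I → EpiModel Ω μ) (E : Set Ω) : Set Ω := ⋂ i, (M i).K E

/-- (Iterative) common qualitative belief operator `C`. -/
def Cqual (M : I → EpiModel Ω μ) (E : Set Ω) : Set Ω := ⋂ n : ℕ, (G M)^[n + 1] E

end Interactive


section AuxProof

open MeasureTheory EpiModel

variable {Ω : Type} [MeasurableSpace Ω] {μ : MeasureTheory.Measure Ω} {I : Type}

lemma aux_t_mono (N : EpiModel Ω μ) (hadd : N.AdditiveTypes) {F₁ F₂ : Set Ω}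
    (h1 : MeasurableSet F₁) (h2 : MeasurableSet F₂) (hsub : F₁ ⊆ F₂) (ω : Ω) :
    N.t ω F₁ ≤ N.t ω F₂ := by
  obtain ⟨ν, hν, ht⟩ := hadd ω
  haveI := hν
  rw [ht _ h1, ht _ h2]
  exact ENNReal.toReal_mono (measure_ne_top ν _) (measure_mono hsub)

lemma aux_t_one (N : EpiModel Ω μ) (hreg : N.Regular) {F : Set Ω}
    (hF : MeasurableSet F) (ω : Ω) (hsub : N.P ω ⊆ F) : N.t ω F = 1 := by
  refine le_antisymm (N.t_le_one ω F) ?_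
  have h := aux_t_mono N hreg.1 (N.P_meas ω) hF hsub ω
  rw [hreg.2.2.1 ω] at h
  exact h

lemma aux_t_iInter_one (N : EpiModel Ω μ) (hadd : N.AdditiveTypes) {A : ℕ → Set Ω}
    (hA : ∀ n, MeasurableSet (A n)) (ω : Ω) (h1 : ∀ n, N.t ω (A n) = 1) :
    N.t ω (⋂ n, A n) = 1 := by
  obtain ⟨ν, hν, ht⟩ := hadd ω
  haveI := hν
  have hone : ∀ n, ν (A n) = 1 := fun n =>
    (ENNReal.toReal_eq_one_iff _).1 (by rw [← ht _ (hA n)]; exact h1 n)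
  have hmI : MeasurableSet (⋂ n, A n) := MeasurableSet.iInter hA
  rw [ht _ hmI, ENNReal.toReal_eq_one_iff, ← prob_compl_eq_zero_iff hmI, Set.compl_iInter]
  exact measure_iUnion_null fun n => (prob_compl_eq_zero_iff (hA n)).2 (hone n)

lemma aux_t_integrable (N : EpiModel Ω μ) {F : Set Ω} (hF : MeasurableSet F) :
    Integrable (fun ω => N.t ω F) μ := by
  haveI := N.prob
  refine Integrable.mono' (integrable_const 1)
    ((N.t_meas F hF).aestronglyMeasurable) ?_
  filter_upwards with ω
  rw [Real.norm_eq_abs, abs_le]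
  exact ⟨by linarith [N.t_nonneg ω F], N.t_le_one ω F⟩

lemma aux_truth_as (N : EpiModel Ω μ) (hreg : N.Regular) {A E : Set Ω}
    (hA : MeasurableSet A) (hE : MeasurableSet E)
    (hA1 : ∀ ω ∈ A, N.t ω A = 1) (hE1 : ∀ ω ∈ A, N.t ω E = 1) :
    μ (A \ E) = 0 := by
  haveI := N.prob
  have hD : MeasurableSet (A \ E) := hA.diff hE
  have hfint : Integrable (fun ω => N.t ω A) μ := aux_t_integrable N hA
  have hgint : Integrable (fun ω => N.t ω (A \ E)) μ := aux_t_integrable N hD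
  have hindint : Integrable (A.indicator fun ω => N.t ω A) μ := hfint.indicator hA
  have hsubint : Integrable (fun ω => N.t ω A - A.indicator (fun ω' => N.t ω' A) ω) μ :=
    hfint.sub hindint
  have hg0 : ∀ ω ∈ A, N.t ω (A \ E) = 0 := by
    intro ω hω
    obtain ⟨ν, hν, ht⟩ := hreg.1 ω
    haveI := hν
    have hνE : ν E = 1 := (ENNReal.toReal_eq_one_iff _).1 (by rw [← ht _ hE]; exact hE1 ω hω)
    have hc : ν Eᶜ = 0 := (prob_compl_eq_zero_iff hE).2 hνE
    have hsub : A \ E ⊆ Eᶜ := fun x hx => hx.2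
    have : ν (A \ E) = 0 := le_antisymm (hc ▸ measure_mono hsub) zero_le
    rw [ht _ hD, this]; simp
  have hpt : (fun ω => N.t ω (A \ E)) ≤
      fun ω => N.t ω A - A.indicator (fun ω' => N.t ω' A) ω := by
    intro ω
    show N.t ω (A \ E) ≤ N.t ω A - A.indicator (fun ω' => N.t ω' A) ω
    by_cases hω : ω ∈ A
    · rw [Set.indicator_of_mem hω, hg0 ω hω]
      simp
    · rw [Set.indicator_of_notMem hω]
      have := aux_t_mono N hreg.1 hD hA Set.diff_subset ω
      simpa using this
  have key : (μ (A \ E)).toReal ≤ 0 := by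
    rw [hreg.2.1 _ hD]
    have h1 := integral_mono hgint hsubint hpt
    have h2 : ∫ ω, (N.t ω A - A.indicator (fun ω' => N.t ω' A) ω) ∂μ = 0 := by
      rw [integral_sub hfint hindint, integral_indicator hA]
      have h3 : ∫ ω in A, N.t ω A ∂μ = (μ A).toReal := by
        rw [setIntegral_congr_fun hA (fun ω hω => hA1 ω hω), setIntegral_const]
        simp
        rfl
      rw [h3, ← hreg.2.1 A hA]
      ring
    linarith
  have h0 : 0 ≤ (μ (A \ E)).toReal := ENNReal.toReal_nonneg
  rcases (ENNReal.toReal_eq_zero_iff _).1 (le_antisymm key h0) with h | h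
  · exact h
  · exact absurd h (measure_ne_top μ _)

lemma aux_t_null_of_null (N : EpiModel Ω μ) (hreg : N.Regular) {D : Set Ω}
    (hD : MeasurableSet D) (hμD : μ D = 0) (ω : Ω) : N.t ω D = 0 := by
  haveI := N.prob
  have hint : Integrable (fun ω' => N.t ω' D) μ := aux_t_integrable N hD
  have hzero : ∫ ω', N.t ω' D ∂μ = 0 := by rw [← hreg.2.1 _ hD, hμD]; simp
  have hae : (fun ω' => N.t ω' D) =ᵐ[μ] 0 :=
    (integral_eq_zero_iff_of_nonneg (fun ω' => N.t_nonneg ω' D) hint).1 hzero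
  by_contra hc
  have hcpos : 0 < N.t ω D := lt_of_le_of_ne (N.t_nonneg ω D) (Ne.symm hc)
  have hnull : μ {ω' | ¬ N.t ω' D = 0} = 0 := by
    have h := hae
    rw [Filter.EventuallyEq, ae_iff] at h
    simpa using h
  have hsub : N.P ω ⊆ {ω' | ¬ N.t ω' D = 0} := by
    intro ω' hω' h0
    have hle := (hreg.2.2.2 ω hω') D hD
    rw [h0] at hle
    linarith
  have := le_antisymm (hnull ▸ measure_mono hsub) zero_le
  exact absurd this (ne_of_gt (N.P_pos ω))

lemma aux_measG_iter [Countable I] (M : I → EpiModel Ω μ) {E : Set Ω}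
    (hE : MeasurableSet E) : ∀ n, MeasurableSet ((G M)^[n] E) := by
  intro n
  induction n with
  | zero => simpa using hE
  | succ n ih =>
    rw [Function.iterate_succ_apply']
    exact MeasurableSet.iInter fun i => (M i).K_meas _ ih

lemma aux_measF_iter [Countable I] (M : I → EpiModel Ω μ) {E : Set Ω}
    (hE : MeasurableSet E) : ∀ n, MeasurableSet ((Finter M 1)^[n] E) := by
  intro n
  induction n with
  | zero => simpa using hE
  | succ n ih =>
    rw [Function.iterate_succ_apply']
    exact MeasurableSet.iInter fun i => ((M i).t_meas _ ih) measurableSet_Ici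

end AuxProof

/-- Corollary 6.2: in a regular interactive model, common
qualitative belief and common 1-belief satisfy Truth Axiom μ-almost surely
(and `t_i(ω,·)`-almost surely). -/
theorem statement17 {Ω : Type} [MeasurableSpace Ω] {μ : MeasureTheory.Measure Ω}
    {I : Type} [Countable I] [Nonempty I]
    (M : I → EpiModel Ω μ) (hreg : ∀ i, (M i).Regular)
    (hCmeas : ∀ E : Set Ω, MeasurableSet E →
      MeasurableSet (Cqual M E) ∧ MeasurableSet (Cp M 1 E)) :
    ∀ E : Set Ω, MeasurableSet E →
      μ (Cqual M E \ E) = 0 ∧ μ (Cp M 1 E \ E) = 0 ∧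
      ∀ (i : I) (ω : Ω),
        (M i).t ω (Cqual M E \ E) = 0 ∧ (M i).t ω (Cp M 1 E \ E) = 0 := by
  intro E hE
  obtain ⟨hCq, hCp⟩ := hCmeas E hE
  have hGiter := aux_measG_iter M hE
  have hFiter := aux_measF_iter M hE
  -- qualitative facts
  have hq1 : ∀ i, ∀ ω ∈ Cqual M E, (M i).t ω (Cqual M E) = 1 ∧ (M i).t ω E = 1 := by
    intro i ω hω
    have hωn : ∀ n, ω ∈ (G M)^[n + 1] E := by
      intro n
      exact Set.mem_iInter.1 hω n
    constructor
    · refine aux_t_one (M i) (hreg i) hCq ω ?_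
      intro x hx
      refine Set.mem_iInter.2 fun n => ?_
      have h2 : ω ∈ (G M)^[n + 2] E := hωn (n + 1)
      rw [Function.iterate_succ_apply'] at h2
      exact (Set.mem_iInter.1 h2 i) hx
    · refine aux_t_one (M i) (hreg i) hE ω ?_
      have h1 : ω ∈ G M E := by simpa using hωn 0
      exact Set.mem_iInter.1 h1 i
  -- quantitative facts
  have hp1 : ∀ i, ∀ ω ∈ Cp M 1 E, (M i).t ω (Cp M 1 E) = 1 ∧ (M i).t ω E = 1 := by
    intro i ω hω
    have hωn : ∀ n, ω ∈ (Finter M 1)^[n + 1] E := fun n => Set.mem_iInter.1 hω n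
    have hone : ∀ n, (M i).t ω ((Finter M 1)^[n + 1] E) = 1 := by
      intro n
      have h2 : ω ∈ (Finter M 1)^[n + 2] E := hωn (n + 1)
      rw [Function.iterate_succ_apply'] at h2
      have h3 : ω ∈ (M i).B 1 ((Finter M 1)^[n + 1] E) := Set.mem_iInter.1 h2 i
      exact le_antisymm ((M i).t_le_one ω _) h3
    refine ⟨?_, ?_⟩
    · exact aux_t_iInter_one (M i) (hreg i).1 (fun n => hFiter (n + 1)) ω hone
    · have h0 : ω ∈ Finter M 1 E := by simpa using hωn 0
      have h1 : ω ∈ (M i).B 1 E := Set.mem_iInter.1 h0 i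
      exact le_antisymm ((M i).t_le_one ω E) h1
  obtain ⟨i₀⟩ := ‹Nonempty I›
  have hμq : μ (Cqual M E \ E) = 0 :=
    aux_truth_as (M i₀) (hreg i₀) hCq hE
      (fun ω h => (hq1 i₀ ω h).1) (fun ω h => (hq1 i₀ ω h).2)
  have hμp : μ (Cp M 1 E \ E) = 0 :=
    aux_truth_as (M i₀) (hreg i₀) hCp hE
      (fun ω h => (hp1 i₀ ω h).1) (fun ω h => (hp1 i₀ ω h).2)
  exact ⟨hμq, hμp, fun i ω =>
    ⟨aux_t_null_of_null (M i) (hreg i) (hCq.diff hE) hμq ω,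
     aux_t_null_of_null (M i) (hreg i) (hCp.diff hE) hμp ω⟩⟩
end

section
/- Let (Ω, Σ, μ, P, t) be an epistemic model satisfying Invariance and Self-Evidence of Beliefs. Then for every measurable E, μ(E) = 0 if and only if t(ω, E) = 0 for all ω ∈ Ω. -/
open MeasureTheory

/-- under Invariance and Self-Evidence of Beliefs, `μ(E) = 0`
iff `t(ω,E) = 0` for all `ω`. -/
theorem statement18 {Ω : Type} [MeasurableSpace Ω] {μ : MeasureTheory.Measure Ω}
    (M : EpiModel Ω μ) (hinv : M.Invariance) (hse : M.SelfEvidence) :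
    ∀ E : Set Ω, MeasurableSet E → (μ E = 0 ↔ ∀ ω, M.t ω E = 0) := by
  intro E hE
  have hprob := M.prob
  have hmeas : Measurable fun ω => M.t ω E := M.t_meas E hE
  have hint : Integrable (fun ω => M.t ω E) μ := by
    apply Integrable.mono' (integrable_const (1 : ℝ)) hmeas.aestronglyMeasurable
    filter_upwards with ω
    rw [Real.norm_eq_abs, abs_of_nonneg (M.t_nonneg ω E)]
    exact M.t_le_one ω E
  constructor
  · intro hμE ω
    have hzero : (μ E).toReal = 0 := by rw [hμE]; simp
    have hintzero : ∫ ω, M.t ω E ∂μ = 0 := by rw [← hinv E hE]; exact hzero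
    have hae : (fun ω => M.t ω E) =ᵐ[μ] 0 :=
      (MeasureTheory.integral_eq_zero_iff_of_nonneg (fun ω => M.t_nonneg ω E) hint).mp hintzero
    by_contra hne
    have hpos : 0 < M.t ω E := lt_of_le_of_ne (M.t_nonneg ω E) (Ne.symm hne)
    have hsub : M.P ω ⊆ {ω' | M.t ω' E ≠ 0} := by
      intro ω' hω'
      have := hse ω hω' E hE
      exact ne_of_gt (lt_of_lt_of_le hpos this)
    have : μ (M.P ω) ≤ μ {ω' | M.t ω' E ≠ 0} := measure_mono hsub
    have hzeroset : μ {ω' | M.t ω' E ≠ 0} = 0 := by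
      have := hae
      rw [Filter.EventuallyEq, MeasureTheory.ae_iff] at this
      simpa using this
    rw [hzeroset] at this
    exact absurd (le_antisymm this zero_le) (ne_of_gt (M.P_pos ω))
  · intro hall
    have : (μ E).toReal = 0 := by
      rw [hinv E hE]
      simp [hall]
    have hfin : μ E ≠ ⊤ := measure_ne_top μ E
    exact (ENNReal.toReal_eq_zero_iff _).mp this |>.resolve_right hfin
end

section
/- Let (Ω, Σ, μ, P, t) be an epistemic model in which each t(ω,·) is monotonic (E ⊆ F measurable implies t(ω,E) ≤ t(ω,F)) and [t(ω)] is measurable for every ω, and which satisfies Certainty of Beliefs: t(ω, [t(ω)]) = 1 for every ω. Then for every p ∈ [0,1] and every measurable E: (i) B^p(E) ⊆ B^1(B^p(E)), and (ii) Ω ∖ B^p(E) ⊆ B^1(Ω ∖ B^p(E)). -/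
open MeasureTheory

/-! Whether `ω ∈ B^p(E)` depends only on the type `t(ω)`, so `B^p(E)` and its complement are
unions of type classes `[t(ω)]`. Certainty of Beliefs puts probability one on one's own class,
and monotonicity carries that probability one over to any event containing it. -/

namespace EpiModel

variable {Ω : Type} [MeasurableSpace Ω] {μ : Measure Ω} (M : EpiModel Ω μ)

theorem measurableSet_B {E : Set Ω} (hE : MeasurableSet E) (p : ℝ) :
    MeasurableSet (M.B p E) :=
  measurableSet_le measurable_const (M.t_meas E hE)

theorem cl_subset_B {E : Set Ω} (hE : MeasurableSet E) {p : ℝ} {ω : Ω} (hω : ω ∈ M.B p E) :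
    M.cl ω ⊆ M.B p E :=
  fun _ hω' => hω.trans (hω'.1 E hE)

theorem cl_subset_compl_B {E : Set Ω} (hE : MeasurableSet E) {p : ℝ} {ω : Ω}
    (hω : ω ∈ (M.B p E)ᶜ) : M.cl ω ⊆ (M.B p E)ᶜ :=
  fun _ hω' hmem => hω (hmem.trans (hω'.2 E hE))

theorem subset_B_one_of_cl_subset
    (hmono : ∀ (ω : Ω) (E F : Set Ω), MeasurableSet E → MeasurableSet F → E ⊆ F →
      M.t ω E ≤ M.t ω F)
    (hcl : ∀ ω, MeasurableSet (M.cl ω)) (hcert : ∀ ω, M.t ω (M.cl ω) = 1)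
    {A : Set Ω} (hA : MeasurableSet A) (hclA : ∀ ω ∈ A, M.cl ω ⊆ A) :
    A ⊆ M.B 1 A := fun ω hω =>
  calc (1 : ℝ) = M.t ω (M.cl ω) := (hcert ω).symm
    _ ≤ M.t ω A := hmono ω _ _ (hcl ω) hA (hclA ω hω)

end EpiModel

/-- Certainty of Beliefs implies both positive and negative
introspection of `p`-beliefs. -/
theorem statement19 {Ω : Type} [MeasurableSpace Ω] {μ : MeasureTheory.Measure Ω}
    (M : EpiModel Ω μ)
    (hmono : ∀ (ω : Ω) (E F : Set Ω), MeasurableSet E → MeasurableSet F → E ⊆ F →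
      M.t ω E ≤ M.t ω F)
    (hcl : ∀ ω, MeasurableSet (M.cl ω))
    (hcert : ∀ ω, M.t ω (M.cl ω) = 1) :
    ∀ p ∈ Set.Icc (0 : ℝ) 1, ∀ E : Set Ω, MeasurableSet E →
      M.B p E ⊆ M.B 1 (M.B p E) ∧ (M.B p E)ᶜ ⊆ M.B 1 ((M.B p E)ᶜ) := by
  intro p _ E hE
  exact ⟨M.subset_B_one_of_cl_subset hmono hcl hcert (M.measurableSet_B hE p)
      fun _ => M.cl_subset_B hE,
    M.subset_B_one_of_cl_subset hmono hcl hcert (M.measurableSet_B hE p).compl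
      fun _ => M.cl_subset_compl_B hE⟩
end
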